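/- Let n ≥ 3, p ≥ 2 with p > (n+2)/(n-2), σ = 2/(p-1), and let w : ℝⁿ → ℝ satisfy 0 < w(x) ≤ C₀ (1+|x|)^{-2/(p-1)}. Define N(φ) = −(w+φ)^p + w^p + p w^{p-1} φ. Then there is a constant C > 0 such that for every ρ ∈ (0,1) and all functions φ₁, φ₂ on ℝⁿ with w + φᵢ ≥ 0 and ‖φᵢ‖* ≤ ρ (i = 1,2), one has ‖N(φ₁) − N(φ₂)‖** ≤ C (ρ + ρ^{p-1}) ‖φ₁ − φ₂‖*. -/

import Mathlib

open Set Filter Topology ENNReal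

/-!
By the mean value theorem, `N(φ₁) - N(φ₂) = ∂ₜN(ξ) (φ₁ - φ₂)`, and
`|∂ₜN(w, t)| ≲ w^{p-2} |t| + |t|^{p-1}`. This bound is homogeneous of degree `p - 1` in
`(w, t)`, and `(|x|^σ)^{p-1} = |x|²` for `σ = 2/(p-1)`; so rescaling by `|x|^σ` turns the decay
`|x|^σ w ≤ C₀`, `|x|^σ |φᵢ| ≤ ρ` into the pointwise estimate
`|x|² |N(φ₁) - N(φ₂)| ≲ (ρ + ρ^{p-1}) |φ₁ - φ₂|`, which is exactly the extra weight
`|x|²` that `‖·‖**` carries compared with `‖·‖*`.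
-/

/-- The weighted norm `‖φ‖* = sup_{|x|≤1} |x|^σ |φ(x)| + sup_{|x|≥1} |x|^{2/(p-1)} |φ(x)|`
(valued in `ℝ≥0∞`). -/
noncomputable def normStar (n : ℕ) (p σ : ℝ) (φ : EuclideanSpace ℝ (Fin n) → ℝ) : ℝ≥0∞ :=
  (⨆ x : {x : EuclideanSpace ℝ (Fin n) // ‖x‖ ≤ 1}, ENNReal.ofReal (‖x.1‖ ^ σ * |φ x.1|)) +
  ⨆ x : {x : EuclideanSpace ℝ (Fin n) // 1 ≤ ‖x‖}, ENNReal.ofReal (‖x.1‖ ^ (2 / (p - 1)) * |φ x.1|)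

/-- The weighted norm
`‖h‖** = sup_{|x|≤1} |x|^{2+σ} |h(x)| + sup_{|x|≥1} |x|^{2+2/(p-1)} |h(x)|`
(valued in `ℝ≥0∞`). -/
noncomputable def normStarStar (n : ℕ) (p σ : ℝ) (h : EuclideanSpace ℝ (Fin n) → ℝ) : ℝ≥0∞ :=
  (⨆ x : {x : EuclideanSpace ℝ (Fin n) // ‖x‖ ≤ 1},
    ENNReal.ofReal (‖x.1‖ ^ (2 + σ) * |h x.1|)) +
  ⨆ x : {x : EuclideanSpace ℝ (Fin n) // 1 ≤ ‖x‖},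
    ENNReal.ofReal (‖x.1‖ ^ (2 + 2 / (p - 1)) * |h x.1|)

noncomputable def nonlinearity (p w t : ℝ) : ℝ := -(w + t) ^ p + w ^ p + p * w ^ (p - 1) * t

noncomputable def nonlinearityLipBound (p w m : ℝ) : ℝ := w ^ (p - 2) * m + m ^ (p - 1)

lemma add_rpow_le_two_rpow_mul_add_rpow {a b r : ℝ} (ha : 0 ≤ a) (hb : 0 ≤ b) (hr : 0 ≤ r) :
    (a + b) ^ r ≤ 2 ^ r * (a ^ r + b ^ r) := by
  have hmax : (a + b) ^ r ≤ 2 ^ r * max a b ^ r := by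
    rw [← Real.mul_rpow zero_le_two (ha.trans (le_max_left a b))]
    exact Real.rpow_le_rpow (add_nonneg ha hb)
      (by linarith [le_max_left a b, le_max_right a b]) hr
  refine hmax.trans (mul_le_mul_of_nonneg_left ?_ (by positivity))
  rcases max_cases a b with ⟨h, -⟩ | ⟨h, -⟩ <;> rw [h] <;>
    linarith [Real.rpow_nonneg ha r, Real.rpow_nonneg hb r]

lemma abs_rpow_sub_rpow_le {q s t : ℝ} (hq : 1 ≤ q) (hs : 0 ≤ s) (ht : 0 ≤ t) :
    |s ^ q - t ^ q| ≤ q * max s t ^ (q - 1) * |s - t| := by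
  have hderiv : ∀ y ∈ uIcc t s,
      HasDerivWithinAt (· ^ q) (q * y ^ (q - 1)) (uIcc t s) y :=
    fun y _ => (Real.hasDerivAt_rpow_const (Or.inr hq)).hasDerivWithinAt
  have hbound : ∀ y ∈ uIcc t s, ‖q * y ^ (q - 1)‖ ≤ q * max s t ^ (q - 1) := by
    intro y hy
    have hy0 : 0 ≤ y := (le_min ht hs).trans hy.1
    rw [Real.norm_of_nonneg (mul_nonneg (by linarith) (Real.rpow_nonneg hy0 _)), max_comm]
    gcongr
    exact hy.2
  simpa only [Real.norm_eq_abs] using (convex_uIcc t s).norm_image_sub_le_of_norm_hasDerivWithin_le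
    hderiv hbound left_mem_uIcc right_mem_uIcc

lemma abs_add_rpow_sub_rpow_le {q w t : ℝ} (hq : 1 ≤ q) (hw : 0 ≤ w) (hwt : 0 ≤ w + t) :
    |(w + t) ^ q - w ^ q| ≤ q * 2 ^ (q - 1) * (w ^ (q - 1) * |t| + |t| ^ q) := by
  have hmax : max (w + t) w ^ (q - 1) ≤ 2 ^ (q - 1) * (w ^ (q - 1) + |t| ^ (q - 1)) := by
    refine (Real.rpow_le_rpow (le_max_of_le_right hw) (max_le ?_ ?_) (by linarith)).trans
      (add_rpow_le_two_rpow_mul_add_rpow hw (abs_nonneg t) (by linarith))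
    · linarith [le_abs_self t]
    · linarith [abs_nonneg t]
  have hpow : |t| ^ (q - 1) * |t| = |t| ^ q := by
    conv_rhs => rw [← sub_add_cancel q 1, Real.rpow_add' (abs_nonneg t) (by linarith),
      Real.rpow_one]
  calc |(w + t) ^ q - w ^ q| ≤ q * max (w + t) w ^ (q - 1) * |w + t - w| :=
        abs_rpow_sub_rpow_le hq hwt hw
    _ ≤ q * (2 ^ (q - 1) * (w ^ (q - 1) + |t| ^ (q - 1))) * |t| := by
        rw [add_sub_cancel_left]; gcongr
    _ = q * 2 ^ (q - 1) * (w ^ (q - 1) * |t| + |t| ^ q) := by rw [← hpow]; ring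

section

variable {p : ℝ}

lemma hasDerivAt_nonlinearity (hp : 1 ≤ p) (w t : ℝ) :
    HasDerivAt (nonlinearity p w) (p * (w ^ (p - 1) - (w + t) ^ (p - 1))) t := by
  have hpow := ((hasDerivAt_id t).const_add w).rpow_const (p := p) (Or.inr hp)
  exact ((hpow.neg.add_const (w ^ p)).add
    ((hasDerivAt_id t).const_mul (p * w ^ (p - 1)))).congr_deriv (by simp only [id]; ring)

lemma abs_nonlinearity_sub_le (hp : 2 ≤ p) {w A B m : ℝ} (hw : 0 ≤ w)
    (hA : 0 ≤ w + A) (hB : 0 ≤ w + B) (hAm : |A| ≤ m) (hBm : |B| ≤ m) :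
    |nonlinearity p w A - nonlinearity p w B|
      ≤ p * (p - 1) * 2 ^ (p - 2) * nonlinearityLipBound p w m * |A - B| := by
  have hbound : ∀ t ∈ uIcc B A, ‖p * (w ^ (p - 1) - (w + t) ^ (p - 1))‖
      ≤ p * (p - 1) * 2 ^ (p - 2) * nonlinearityLipBound p w m := by
    intro t ht
    have hwt : 0 ≤ w + t := by
      have := (uIcc_subset_Icc ⟨(neg_le_iff_add_nonneg'.2 hB), (le_abs_self B).trans hBm⟩
        ⟨(neg_le_iff_add_nonneg'.2 hA), (le_abs_self A).trans hAm⟩ ht).1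
      linarith
    have htm : |t| ≤ m := abs_le.2 (uIcc_subset_Icc (abs_le.1 hBm) (abs_le.1 hAm) ht)
    have hderiv := abs_add_rpow_sub_rpow_le (q := p - 1) (by linarith) hw hwt
    rw [show p - 1 - 1 = p - 2 by ring] at hderiv
    rw [norm_mul, Real.norm_eq_abs, Real.norm_eq_abs, abs_sub_comm, abs_of_nonneg (by linarith),
      mul_assoc (p * (p - 1)), mul_assoc p]
    gcongr
    refine hderiv.trans ?_
    rw [mul_assoc, nonlinearityLipBound]
    gcongr
    all_goals linarith
  simpa only [Real.norm_eq_abs] using (convex_uIcc B A).norm_image_sub_le_of_norm_hasDerivWithin_le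
    (fun t _ => (hasDerivAt_nonlinearity (by linarith) w t).hasDerivWithinAt) hbound
    left_mem_uIcc right_mem_uIcc

lemma nonlinearityLipBound_mul_mul (hp : 1 < p) {c w m : ℝ} (hc : 0 ≤ c) (hw : 0 ≤ w)
    (hm : 0 ≤ m) :
    nonlinearityLipBound p (c * w) (c * m) = c ^ (p - 1) * nonlinearityLipBound p w m := by
  have hc' : c ^ (p - 2) * c = c ^ (p - 1) := by
    rw [← Real.rpow_add_one' hc (by linarith)]; ring_nf
  simp only [nonlinearityLipBound]
  rw [Real.mul_rpow hc hw, Real.mul_rpow hc hm, ← hc']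
  ring

lemma nonlinearityLipBound_mono (hp : 2 ≤ p) {w w' m m' : ℝ} (hw : 0 ≤ w) (hm : 0 ≤ m)
    (hww' : w ≤ w') (hmm' : m ≤ m') :
    nonlinearityLipBound p w m ≤ nonlinearityLipBound p w' m' := by
  have := Real.rpow_nonneg (hw.trans hww') (p - 2)
  simp only [nonlinearityLipBound]
  gcongr
  linarith

lemma rpow_two_div_sub_one_rpow_sub_one (hp : 1 < p) {r : ℝ} (hr : 0 ≤ r) :
    (r ^ (2 / (p - 1))) ^ (p - 1) = r ^ 2 := by
  rw [← Real.rpow_mul hr, div_mul_cancel₀ _ (by linarith), Real.rpow_two]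

end

lemma rpow_mul_le_of_le_mul_one_add_rpow_neg {σ r w C : ℝ} (hσ : 0 ≤ σ) (hr : 0 ≤ r)
    (hC : 0 ≤ C) (hw : w ≤ C * (1 + r) ^ (-σ)) : r ^ σ * w ≤ C := by
  have h1r : 0 < 1 + r := by linarith
  calc r ^ σ * w ≤ r ^ σ * (C * (1 + r) ^ (-σ)) := by gcongr
    _ ≤ (1 + r) ^ σ * (C * (1 + r) ^ (-σ)) := by gcongr; linarith
    _ = C := by rw [Real.rpow_neg h1r.le]; field_simp

lemma sq_mul_abs_nonlinearity_sub_le {p C₀ ρ r w A B : ℝ} (hp : 2 ≤ p) (hC₀ : 0 ≤ C₀)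
    (hr : 0 ≤ r) (hw₀ : 0 ≤ w) (hw : w ≤ C₀ * (1 + r) ^ (-(2 / (p - 1))))
    (hA₀ : 0 ≤ w + A) (hB₀ : 0 ≤ w + B)
    (hA : r ^ (2 / (p - 1)) * |A| ≤ ρ) (hB : r ^ (2 / (p - 1)) * |B| ≤ ρ) :
    r ^ 2 * |nonlinearity p w A - nonlinearity p w B|
      ≤ p * (p - 1) * 2 ^ (p - 2) * nonlinearityLipBound p C₀ ρ * |A - B| := by
  set m := max |A| |B|
  have hm : 0 ≤ m := (abs_nonneg A).trans (le_max_left _ _)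
  have hσ : 0 ≤ 2 / (p - 1) := div_nonneg zero_le_two (by linarith)
  have hrσ : 0 ≤ r ^ (2 / (p - 1)) := Real.rpow_nonneg hr _
  have hscaled : r ^ 2 * nonlinearityLipBound p w m ≤ nonlinearityLipBound p C₀ ρ := by
    rw [← rpow_two_div_sub_one_rpow_sub_one (p := p) (by linarith) hr,
      ← nonlinearityLipBound_mul_mul (p := p) (by linarith) hrσ hw₀ hm]
    exact nonlinearityLipBound_mono hp (mul_nonneg hrσ hw₀) (mul_nonneg hrσ hm)
      (rpow_mul_le_of_le_mul_one_add_rpow_neg hσ hr hC₀ hw)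
      (by rw [mul_max_of_nonneg _ _ hrσ]; exact max_le hA hB)
  have hK : 0 ≤ p * (p - 1) * 2 ^ (p - 2) := by
    have : 0 ≤ p - 1 := by linarith
    positivity
  calc r ^ 2 * |nonlinearity p w A - nonlinearity p w B|
      ≤ r ^ 2 * (p * (p - 1) * 2 ^ (p - 2) * nonlinearityLipBound p w m * |A - B|) := by
        gcongr
        exact abs_nonlinearity_sub_le hp hw₀ hA₀ hB₀ (le_max_left _ _) (le_max_right _ _)
    _ = p * (p - 1) * 2 ^ (p - 2) * (r ^ 2 * nonlinearityLipBound p w m) * |A - B| := by ring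
    _ ≤ p * (p - 1) * 2 ^ (p - 2) * nonlinearityLipBound p C₀ ρ * |A - B| := by gcongr

section

variable {n : ℕ} {p : ℝ}

lemma ofReal_le_normStar (φ : EuclideanSpace ℝ (Fin n) → ℝ)
    (x : EuclideanSpace ℝ (Fin n)) :
    ENNReal.ofReal (‖x‖ ^ (2 / (p - 1)) * |φ x|) ≤ normStar n p (2 / (p - 1)) φ := by
  rw [normStar]
  rcases le_total ‖x‖ 1 with hx | hx
  · exact le_add_right (le_iSup_of_le ⟨x, hx⟩ le_rfl)
  · exact le_add_left (le_iSup_of_le ⟨x, hx⟩ le_rfl)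

lemma normStarStar_le_mul_normStar {σ c : ℝ} (hσ : 2 + σ ≠ 0) (hp : 2 + 2 / (p - 1) ≠ 0)
    (hc : 0 ≤ c) {h g : EuclideanSpace ℝ (Fin n) → ℝ}
    (hhg : ∀ x, ‖x‖ ^ 2 * |h x| ≤ c * |g x|) :
    normStarStar n p σ h ≤ ENNReal.ofReal c * normStar n p σ g := by
  have hweight : ∀ {τ : ℝ}, 2 + τ ≠ 0 → ∀ x, ENNReal.ofReal (‖x‖ ^ (2 + τ) * |h x|)
      ≤ ENNReal.ofReal c * ENNReal.ofReal (‖x‖ ^ τ * |g x|) := by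
    intro τ hτ x
    rw [← ENNReal.ofReal_mul hc, Real.rpow_add' (norm_nonneg x) hτ, Real.rpow_two]
    apply ENNReal.ofReal_le_ofReal
    calc ‖x‖ ^ 2 * ‖x‖ ^ τ * |h x| = ‖x‖ ^ τ * (‖x‖ ^ 2 * |h x|) := by ring
      _ ≤ ‖x‖ ^ τ * (c * |g x|) := by gcongr ‖x‖ ^ τ * ?_; exact hhg x
      _ = c * (‖x‖ ^ τ * |g x|) := by ring
  rw [normStarStar, normStar, mul_add, ENNReal.mul_iSup, ENNReal.mul_iSup]
  exact add_le_add (iSup_mono fun x => hweight hσ x.1) (iSup_mono fun x => hweight hp x.1)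

end

theorem nonlinear_term_lipschitz_general
    (n : ℕ) (p : ℝ) (hp2 : 2 ≤ p)
    (C₀ : ℝ) (hC₀ : 0 < C₀)
    (w : EuclideanSpace ℝ (Fin n) → ℝ)
    (hw : ∀ x, 0 < w x ∧ w x ≤ C₀ * (1 + ‖x‖) ^ (-(2 / (p - 1)))) :
    ∃ C : ℝ, 0 < C ∧
      ∀ ρ : ℝ, ρ ∈ Ioo (0 : ℝ) 1 →
        ∀ φ₁ φ₂ : EuclideanSpace ℝ (Fin n) → ℝ,
          (∀ x, 0 ≤ w x + φ₁ x) → (∀ x, 0 ≤ w x + φ₂ x) →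
          normStar n p (2 / (p - 1)) φ₁ ≤ ENNReal.ofReal ρ →
          normStar n p (2 / (p - 1)) φ₂ ≤ ENNReal.ofReal ρ →
          normStarStar n p (2 / (p - 1))
              (fun x => (-(w x + φ₁ x) ^ p + w x ^ p + p * w x ^ (p - 1) * φ₁ x)
                - (-(w x + φ₂ x) ^ p + w x ^ p + p * w x ^ (p - 1) * φ₂ x))
            ≤ ENNReal.ofReal (C * (ρ + ρ ^ (p - 1)))
              * normStar n p (2 / (p - 1)) (fun x => φ₁ x - φ₂ x) := by
  have hp1 : 0 < p - 1 := by linarith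
  have hσ : 0 < 2 / (p - 1) := div_pos two_pos hp1
  set K := p * (p - 1) * 2 ^ (p - 2)
  have hK : 0 < K := by positivity
  refine ⟨K * (C₀ ^ (p - 2) + 1), by positivity, ?_⟩
  rintro ρ ⟨hρ, -⟩ φ₁ φ₂ hφ₁ hφ₂ hnorm₁ hnorm₂
  have hweighted : ∀ φ, normStar n p (2 / (p - 1)) φ ≤ ENNReal.ofReal ρ →
      ∀ x, ‖x‖ ^ (2 / (p - 1)) * |φ x| ≤ ρ := fun φ hφ x =>
    (ENNReal.ofReal_le_ofReal_iff hρ.le).1 ((ofReal_le_normStar φ x).trans hφ)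
  have hLip : nonlinearityLipBound p C₀ ρ ≤ (C₀ ^ (p - 2) + 1) * (ρ + ρ ^ (p - 1)) := by
    have := Real.rpow_nonneg hC₀.le (p - 2)
    have := Real.rpow_nonneg hρ.le (p - 1)
    rw [nonlinearityLipBound]
    nlinarith
  have hσ₂ : 2 + 2 / (p - 1) ≠ 0 := (add_pos two_pos hσ).ne'
  refine normStarStar_le_mul_normStar hσ₂ hσ₂ (by positivity) fun x => ?_
  calc _ ≤ K * nonlinearityLipBound p C₀ ρ * |φ₁ x - φ₂ x| :=
        sq_mul_abs_nonlinearity_sub_le hp2 hC₀.le (norm_nonneg x) (hw x).1.le (hw x).2 (hφ₁ x)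
          (hφ₂ x) (hweighted φ₁ hnorm₁ x) (hweighted φ₂ hnorm₂ x)
    _ ≤ K * ((C₀ ^ (p - 2) + 1) * (ρ + ρ ^ (p - 1))) * |φ₁ x - φ₂ x| := by gcongr
    _ = _ := by ring

/-- for `n ≥ 3`, `p ≥ 2` with `p > (n+2)/(n-2)`, `σ = 2/(p-1)`, and
`0 < w(x) ≤ C₀(1+|x|)^{-2/(p-1)}`, with `N(φ) = -(w+φ)ᵖ + wᵖ + p w^{p-1} φ`, there is
`C > 0` such that for every `ρ ∈ (0,1)` and all `φ₁, φ₂` with `w + φᵢ ≥ 0` and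
`‖φᵢ‖* ≤ ρ`, one has `‖N(φ₁) - N(φ₂)‖** ≤ C (ρ + ρ^{p-1}) ‖φ₁ - φ₂‖*`. -/
theorem nonlinear_term_lipschitz
    (n : ℕ) (hn : 3 ≤ n) (p : ℝ) (hp2 : 2 ≤ p)
    (hp : ((n : ℝ) + 2) / ((n : ℝ) - 2) < p)
    (C₀ : ℝ) (hC₀ : 0 < C₀)
    (w : EuclideanSpace ℝ (Fin n) → ℝ)
    (hw : ∀ x, 0 < w x ∧ w x ≤ C₀ * (1 + ‖x‖) ^ (-(2 / (p - 1)))) :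
    ∃ C : ℝ, 0 < C ∧
      ∀ ρ : ℝ, ρ ∈ Ioo (0 : ℝ) 1 →
        ∀ φ₁ φ₂ : EuclideanSpace ℝ (Fin n) → ℝ,
          (∀ x, 0 ≤ w x + φ₁ x) → (∀ x, 0 ≤ w x + φ₂ x) →
          normStar n p (2 / (p - 1)) φ₁ ≤ ENNReal.ofReal ρ →
          normStar n p (2 / (p - 1)) φ₂ ≤ ENNReal.ofReal ρ →
          normStarStar n p (2 / (p - 1))
              (fun x => (-(w x + φ₁ x) ^ p + w x ^ p + p * w x ^ (p - 1) * φ₁ x)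
                - (-(w x + φ₂ x) ^ p + w x ^ p + p * w x ^ (p - 1) * φ₂ x))
            ≤ ENNReal.ofReal (C * (ρ + ρ ^ (p - 1)))
              * normStar n p (2 / (p - 1)) (fun x => φ₁ x - φ₂ x) :=
  nonlinear_term_lipschitz_general n p hp2 C₀ hC₀ w hw
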